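/- Let n ≥ 3, let W be a four-linear form on ℝⁿ with the symmetries of a Weyl tensor, and let h_{ij}(x) = (1/3)∑_{p,q=1}^n W_{ipjq} x_p x_q. Then for all k, l ∈ {1,…,n}: ∫_{𝕊^{n−1}} ∑_{p=1}^n h_{kp}(x) h_{pl}(x) dσ(x) = (ω_{n−1}/(18n(n+2))) T_{kl}, where the integral is over the unit sphere 𝕊^{n−1} ⊂ ℝⁿ with its canonical measure σ and ω_{n−1} = σ(𝕊^{n−1}). -/

import Mathlib

open MeasureTheory Real

noncomputable section

/-- The Euclidean space `ℝⁿ`. -/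
abbrev En (n : ℕ) := EuclideanSpace ℝ (Fin n)

/-- `W` has the symmetries of a Weyl tensor. -/
def IsWeyl (n : ℕ) (W : Fin n → Fin n → Fin n → Fin n → ℝ) : Prop :=
  (∀ i j k l, W i j k l = -W j i k l) ∧
  (∀ i j k l, W i j k l = -W i j l k) ∧
  (∀ i j k l, W i j k l = W k l i j) ∧
  (∀ j l, ∑ i, W i j i l = 0) ∧
  (∀ i j k l, W i j k l + W j k i l + W k i j l = 0)

/-- `T_{kl} = ∑_{p,q,r} (W_{kpqr}+W_{krqp})(W_{lpqr}+W_{lrqp})`. -/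
def Tkl (n : ℕ) (W : Fin n → Fin n → Fin n → Fin n → ℝ) (k l : Fin n) : ℝ :=
  ∑ p, ∑ q, ∑ r, (W k p q r + W k r q p) * (W l p q r + W l r q p)

/-- The quadratic field associated to `W`: `h_{ij}(x) = (1/3)∑_{p,q} W_{ipjq} x_p x_q`. -/
noncomputable def hW (n : ℕ) (W : Fin n → Fin n → Fin n → Fin n → ℝ)
    (x : En n) (i j : Fin n) : ℝ :=
  (1 / 3) * ∑ p, ∑ q, W i p j q * x p * x q

/-- The canonical surface measure on the unit sphere `𝕊^{n-1} ⊂ ℝⁿ`. -/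
noncomputable def sphereMeasure (n : ℕ) :
    Measure (Metric.sphere (0 : En n) 1) :=
  (volume : Measure (En n)).toSphere

/-- `ω_{n-1}`, the total canonical measure of the unit sphere `𝕊^{n-1} ⊂ ℝⁿ`. -/
noncomputable def omegaSphere (n : ℕ) : ℝ := (sphereMeasure n Set.univ).toReal

/-! Expanding `h_{kp} h_{pl}` turns the integrand into a quartic polynomial, so everything
reduces to the fourth moments `∫ x_a x_b x_c x_d dσ`. Since `σ` is invariant under linear
isometries, these equal `ω_{n-1}/(n(n+2)) (δ_ab δ_cd + δ_ac δ_bd + δ_ad δ_bc)`: flipping the sign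
of one coordinate kills every moment in which some index occurs exactly once, swapping two
coordinates gives `∫ x_a⁴ = ∫ x_b⁴`, the reflection
`(x_a, x_b) ↦ ((x_a + x_b)/√2, (x_a - x_b)/√2)` sends `x_a⁴ + x_b⁴` to
`(x_a⁴ + x_b⁴)/2 + 3 x_a² x_b²` and hence gives `∫ x_a⁴ = 3 ∫ x_a² x_b²`, and
`∑_{a,b} x_a² x_b² = 1` on the sphere fixes the constant. Contracting with `W`, the
trace-freeness of `W` kills the `δ_ab δ_cd` term and the pair symmetry turns the other two into
`T_{kl}/2`. -/

open Metric Set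
open scoped Pointwise

section SphereInvariance

variable {E : Type*} [NormedAddCommGroup E] [NormedSpace ℝ E]

def LinearIsometryEquiv.sphereHomeomorph (f : E ≃ₗᵢ[ℝ] E) :
    sphere (0 : E) 1 ≃ₜ sphere (0 : E) 1 :=
  f.toHomeomorph.subtype fun x => by simp

lemma LinearIsometryEquiv.preimage_set_smul (f : E ≃ₗᵢ[ℝ] E) (S : Set ℝ) (t : Set E) :
    f ⁻¹' (S • t) = S • f ⁻¹' t := by
  ext x
  simp only [mem_smul, mem_preimage]
  constructor
  · rintro ⟨r, hr, y, hy, hxy⟩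
    exact ⟨r, hr, f.symm y, by simpa using hy, f.injective (by simp [hxy])⟩
  · rintro ⟨r, hr, y, hy, rfl⟩
    exact ⟨r, hr, f y, hy, by simp⟩

lemma LinearIsometryEquiv.image_val_preimage_sphereHomeomorph (f : E ≃ₗᵢ[ℝ] E)
    (s : Set (sphere (0 : E) 1)) :
    ((↑) '' (f.sphereHomeomorph ⁻¹' s) : Set E) = f ⁻¹' ((↑) '' s) := by
  ext x
  constructor
  · rintro ⟨y, hy, rfl⟩
    exact ⟨_, hy, rfl⟩
  · rintro ⟨y, hy, hxy⟩
    have hx : x ∈ sphere (0 : E) 1 := by simpa [hxy] using y.2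
    have hxy' : f.sphereHomeomorph ⟨x, hx⟩ = y := Subtype.ext hxy.symm
    exact ⟨⟨x, hx⟩, by rwa [mem_preimage, hxy'], rfl⟩

variable [MeasurableSpace E] [BorelSpace E]

lemma LinearIsometryEquiv.measurePreserving_sphereHomeomorph (μ : Measure E)
    (f : E ≃ₗᵢ[ℝ] E) (hf : MeasurePreserving f μ μ) :
    MeasurePreserving f.sphereHomeomorph μ.toSphere μ.toSphere := by
  refine ⟨f.sphereHomeomorph.continuous.measurable, Measure.ext fun s hs => ?_⟩
  have hs' := f.sphereHomeomorph.continuous.measurable hs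
  rw [Measure.map_apply f.sphereHomeomorph.continuous.measurable hs, Measure.toSphere_apply' _ hs',
    Measure.toSphere_apply' _ hs, f.image_val_preimage_sphereHomeomorph, ← f.preimage_set_smul]
  congr 1
  exact hf.measure_preimage_emb f.toHomeomorph.measurableEmbedding _

lemma LinearIsometryEquiv.integral_comp_sphereHomeomorph (μ : Measure E)
    (f : E ≃ₗᵢ[ℝ] E) (hf : MeasurePreserving f μ μ) (g : E → ℝ) :
    ∫ x : sphere (0 : E) 1, g (f x) ∂μ.toSphere = ∫ x : sphere (0 : E) 1, g x ∂μ.toSphere :=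
  (f.measurePreserving_sphereHomeomorph μ hf).integral_comp
    f.sphereHomeomorph.measurableEmbedding (fun x => g x)

end SphereInvariance

section PlaneReflection

variable {ι : Type*} [DecidableEq ι]

def planeReflectionLinear (a b : ι) (c s : ℝ) :
    EuclideanSpace ℝ ι →ₗ[ℝ] EuclideanSpace ℝ ι where
  toFun x := WithLp.toLp 2 fun i =>
    if i = a then c * x a + s * x b else if i = b then s * x a - c * x b else x i
  map_add' x y := by
    ext i
    simp only [PiLp.add_apply]
    split_ifs <;> ring
  map_smul' r x := by
    ext i
    simp only [PiLp.smul_apply, smul_eq_mul, RingHom.id_apply]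
    split_ifs <;> ring

lemma planeReflectionLinear_apply (a b : ι) (c s : ℝ) (x : EuclideanSpace ℝ ι) (i : ι) :
    planeReflectionLinear a b c s x i =
      if i = a then c * x a + s * x b else if i = b then s * x a - c * x b else x i :=
  rfl

variable [Fintype ι]

lemma norm_planeReflectionLinear {a b : ι} (hab : a ≠ b) {c s : ℝ} (hcs : c ^ 2 + s ^ 2 = 1)
    (x : EuclideanSpace ℝ ι) : ‖planeReflectionLinear a b c s x‖ = ‖x‖ := by
  have hsq : ∀ i, planeReflectionLinear a b c s x i ^ 2 = x i ^ 2
      + (if i = a then (c * x a + s * x b) ^ 2 - x a ^ 2 else 0)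
      + (if i = b then (s * x a - c * x b) ^ 2 - x b ^ 2 else 0) := by
    intro i
    rw [planeReflectionLinear_apply]
    split_ifs with hia hib hib <;> first | exact absurd (hia.symm.trans hib) hab | subst_vars; ring
  have hsum : ∑ i, planeReflectionLinear a b c s x i ^ 2 = ∑ i, x i ^ 2 := by
    simp only [hsq, Finset.sum_add_distrib, Finset.sum_ite_eq', Finset.mem_univ, if_true]
    linear_combination (x a ^ 2 + x b ^ 2) * hcs
  simp only [EuclideanSpace.norm_eq, Real.norm_eq_abs, sq_abs, hsum]

def planeReflection {a b : ι} (hab : a ≠ b) {c s : ℝ} (hcs : c ^ 2 + s ^ 2 = 1) :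
    EuclideanSpace ℝ ι ≃ₗᵢ[ℝ] EuclideanSpace ℝ ι :=
  LinearIsometry.toLinearIsometryEquiv
    ⟨planeReflectionLinear a b c s, norm_planeReflectionLinear hab hcs⟩ rfl

lemma planeReflection_apply {a b : ι} (hab : a ≠ b) {c s : ℝ} (hcs : c ^ 2 + s ^ 2 = 1)
    (x : EuclideanSpace ℝ ι) (i : ι) :
    planeReflection hab hcs x i =
      if i = a then c * x a + s * x b else if i = b then s * x a - c * x b else x i :=
  rfl

end PlaneReflection

section Moments

variable {n : ℕ}

instance : IsFiniteMeasure (sphereMeasure n) :=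
  inferInstanceAs (IsFiniteMeasure (volume : Measure (En n)).toSphere)

lemma integrable_sphereMeasure {g : sphere (0 : En n) 1 → ℝ} (hg : Continuous g) :
    Integrable g (sphereMeasure n) :=
  hg.integrable_of_hasCompactSupport (HasCompactSupport.of_compactSpace _)

lemma integral_sum_sum_sphereMeasure {ι κ : Type*} (s : Finset ι) (t : Finset κ)
    (f : ι → κ → sphere (0 : En n) 1 → ℝ) (hf : ∀ i j, Continuous (f i j)) :
    ∫ x, ∑ i ∈ s, ∑ j ∈ t, f i j x ∂sphereMeasure n =
      ∑ i ∈ s, ∑ j ∈ t, ∫ x, f i j x ∂sphereMeasure n := by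
  rw [integral_finsetSum _ fun i _ => integrable_finsetSum _ fun j _ =>
    integrable_sphereMeasure (hf i j)]
  exact Finset.sum_congr rfl fun i _ =>
    integral_finsetSum _ fun j _ => integrable_sphereMeasure (hf i j)

lemma integral_sphereMeasure_comp_linearIsometryEquiv (f : En n ≃ₗᵢ[ℝ] En n) (g : En n → ℝ) :
    ∫ x : sphere (0 : En n) 1, g (f x) ∂sphereMeasure n =
      ∫ x : sphere (0 : En n) 1, g x ∂sphereMeasure n :=
  f.integral_comp_sphereHomeomorph volume f.measurePreserving g

def sphereMoment (n : ℕ) (a b c d : Fin n) : ℝ :=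
  ∫ x : sphere (0 : En n) 1, (x : En n) a * (x : En n) b * (x : En n) c * (x : En n) d
    ∂sphereMeasure n

lemma sphereMoment_congr {a b c d a' b' c' d' : Fin n}
    (h : ∀ x : En n, x a * x b * x c * x d = x a' * x b' * x c' * x d') :
    sphereMoment n a b c d = sphereMoment n a' b' c' d' := by
  simp only [sphereMoment, h]

lemma sphereMoment_eq_zero_of_ne {a b c d : Fin n} (hb : b ≠ a) (hc : c ≠ a) (hd : d ≠ a) :
    sphereMoment n a b c d = 0 := by
  let R := planeReflection hb.symm (c := -1) (s := 0) (by norm_num)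
  have hR : ∀ x i, R x i = if i = a then -x i else x i := by
    intro x i
    rw [planeReflection_apply]
    split_ifs <;> subst_vars <;> ring
  have h := integral_sphereMeasure_comp_linearIsometryEquiv R fun x => x a * x b * x c * x d
  simp only [hR, if_pos, if_neg hb, if_neg hc, if_neg hd, neg_mul, integral_neg] at h
  unfold sphereMoment
  linarith

lemma sphereMoment_self_eq (a b : Fin n) : sphereMoment n a a a a = sphereMoment n b b b b := by
  rcases eq_or_ne a b with rfl | hab
  · rfl
  let R := planeReflection hab (c := 0) (s := 1) (by norm_num)
  have h := integral_sphereMeasure_comp_linearIsometryEquiv R fun x => x a * x a * x a * x a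
  simp only [R, planeReflection_apply, if_pos, zero_mul, one_mul, zero_add] at h
  exact h.symm

lemma sphereMoment_self_add_self {a b : Fin n} (hab : a ≠ b) :
    sphereMoment n a a a a + sphereMoment n b b b b = 6 * sphereMoment n a a b b := by
  set t : ℝ := (√2)⁻¹
  have ht : t ^ 2 = 1 / 2 := by rw [inv_pow, Real.sq_sqrt zero_le_two, one_div]
  let R := planeReflection hab (c := t) (s := t) (by rw [ht]; norm_num)
  have h := integral_sphereMeasure_comp_linearIsometryEquiv R fun x =>
    x a * x a * x a * x a + x b * x b * x b * x b
  have hpt : ∀ x : En n, R x a * R x a * R x a * R x a + R x b * R x b * R x b * R x b =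
      (x a * x a * x a * x a + x b * x b * x b * x b) / 2 + 3 * (x a * x a * x b * x b) := by
    intro x
    simp only [R, planeReflection_apply, if_pos, if_neg hab.symm]
    linear_combination (t ^ 2 + 1 / 2) * ((x a + x b) ^ 4 + (x a - x b) ^ 4) * ht
  have hint : ∀ i j k l : Fin n, Integrable (fun x : sphere (0 : En n) 1 =>
      (x : En n) i * (x : En n) j * (x : En n) k * (x : En n) l) (sphereMeasure n) :=
    fun i j k l => integrable_sphereMeasure (by fun_prop)
  have hsum : Integrable (fun x : sphere (0 : En n) 1 =>
      (x : En n) a * (x : En n) a * (x : En n) a * (x : En n) a +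
        (x : En n) b * (x : En n) b * (x : En n) b * (x : En n) b) (sphereMeasure n) :=
    (hint a a a a).add (hint b b b b)
  simp only [hpt] at h
  rw [integral_add (hsum.div_const 2) ((hint a a b b).const_mul 3), integral_div,
    integral_const_mul, integral_add (hint a a a a) (hint b b b b)] at h
  unfold sphereMoment
  linarith

lemma sum_sum_sphereMoment : ∑ a, ∑ b, sphereMoment n a a b b = omegaSphere n := by
  have hnorm : ∀ x : sphere (0 : En n) 1,
      ∑ a, ∑ b, (x : En n) a * (x : En n) a * (x : En n) b * (x : En n) b = 1 := by
    intro x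
    have hx : ∑ a, (x : En n) a ^ 2 = 1 := by
      simpa [norm_eq_of_mem_sphere x] using (EuclideanSpace.norm_sq_eq (x : En n)).symm
    simp only [mul_assoc, ← Finset.mul_sum, ← Finset.sum_mul, ← sq, hx]
    simp
  unfold sphereMoment
  rw [← integral_sum_sum_sphereMeasure _ _ _ fun a b => by fun_prop]
  simp only [hnorm, integral_const, smul_eq_mul, mul_one]
  rfl

lemma sphereMoment_sq_sq (a b : Fin n) :
    sphereMoment n a a b b = (if a = b then 3 else 1) * (omegaSphere n / (n * (n + 2))) := by
  set A := sphereMoment n a a a a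
  have hA : ∀ i j, sphereMoment n i i j j = (1 + if i = j then 2 else 0) * (A / 3) := by
    intro i j
    split_ifs with h
    · subst h; rw [sphereMoment_self_eq i a]; ring
    · have := sphereMoment_self_add_self h
      rw [sphereMoment_self_eq i a, sphereMoment_self_eq j a] at this
      linarith
  have htr := sum_sum_sphereMoment (n := n)
  simp only [hA, add_mul, Finset.sum_add_distrib, ite_mul, zero_mul, Finset.sum_ite_eq,
    Finset.mem_univ, if_true, Finset.sum_const, Finset.card_univ, Fintype.card_fin,
    nsmul_eq_mul] at htr
  have hn : (n : ℝ) ≠ 0 := by exact_mod_cast (Fin.pos a).ne'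
  have hAval : A = 3 * (omegaSphere n / (n * (n + 2))) := by
    field_simp
    linear_combination 3 * htr
  rw [hA, hAval]
  split_ifs <;> ring

theorem sphereMoment_eq (a b c d : Fin n) :
    sphereMoment n a b c d = omegaSphere n / (n * (n + 2)) *
      ((if a = b ∧ c = d then 1 else 0) + (if a = c ∧ b = d then 1 else 0) +
        (if a = d ∧ b = c then 1 else 0)) := by
  by_cases ha : b ≠ a ∧ c ≠ a ∧ d ≠ a
  · rw [sphereMoment_eq_zero_of_ne ha.1 ha.2.1 ha.2.2]
    simp [ha.1.symm, ha.2.1.symm, ha.2.2.symm]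
  by_cases hb : a ≠ b ∧ c ≠ b ∧ d ≠ b
  · rw [sphereMoment_congr (a' := b) (b' := a) (c' := c) (d' := d) fun x => by ring,
      sphereMoment_eq_zero_of_ne hb.1 hb.2.1 hb.2.2]
    simp [hb.1, hb.2.1.symm, hb.2.2.symm]
  by_cases hc : a ≠ c ∧ b ≠ c ∧ d ≠ c
  · rw [sphereMoment_congr (a' := c) (b' := a) (c' := b) (d' := d) fun x => by ring,
      sphereMoment_eq_zero_of_ne hc.1 hc.2.1 hc.2.2]
    simp [hc.1, hc.2.1, hc.2.2.symm]
  by_cases hd : a ≠ d ∧ b ≠ d ∧ c ≠ d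
  · rw [sphereMoment_congr (a' := d) (b' := a) (c' := b) (d' := c) fun x => by ring,
      sphereMoment_eq_zero_of_ne hd.1 hd.2.1 hd.2.2]
    simp [hd.1, hd.2.1, hd.2.2]
  rcases eq_or_ne a b with rfl | hab
  · obtain rfl : c = d := by grind
    rw [sphereMoment_sq_sq]
    rcases eq_or_ne a c with rfl | hac
    · simp only [and_self, if_true]
      ring
    · simp [hac]
  rcases eq_or_ne a c with rfl | hac
  · obtain rfl : b = d := by grind
    rw [sphereMoment_congr (a' := a) (b' := a) (c' := b) (d' := b) fun x => by ring,
      sphereMoment_sq_sq]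
    simp [hab]
  obtain ⟨rfl, rfl⟩ : a = d ∧ b = c := by grind
  rw [sphereMoment_congr (a' := a) (b' := a) (c' := b) (d' := b) fun x => by ring,
    sphereMoment_sq_sq]
  simp [hab]

theorem integral_quadForm_mul_quadForm (A B : Fin n → Fin n → ℝ) :
    ∫ x : sphere (0 : En n) 1, (∑ a, ∑ b, A a b * (x : En n) a * (x : En n) b) *
        (∑ c, ∑ d, B c d * (x : En n) c * (x : En n) d) ∂sphereMeasure n =
      omegaSphere n / (n * (n + 2)) *
        ((∑ a, A a a) * (∑ c, B c c) + ∑ a, ∑ b, A a b * (B a b + B b a)) := by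
  have hpt : ∀ x : En n, (∑ a, ∑ b, A a b * x a * x b) * (∑ c, ∑ d, B c d * x c * x d) =
      ∑ a, ∑ b, A a b * ∑ c, ∑ d, B c d * (x a * x b * x c * x d) := by
    intro x
    simp only [Finset.sum_mul]
    simp only [Finset.mul_sum]
    refine Finset.sum_congr rfl fun a _ => Finset.sum_congr rfl fun b _ =>
      Finset.sum_congr rfl fun c _ => Finset.sum_congr rfl fun d _ => by ring
  simp only [hpt]
  rw [integral_sum_sum_sphereMeasure _ _ _ fun a b => by fun_prop]
  have hinner : ∀ a b : Fin n, ∫ x : sphere (0 : En n) 1, ∑ c, ∑ d,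
      B c d * ((x : En n) a * (x : En n) b * (x : En n) c * (x : En n) d) ∂sphereMeasure n =
      ∑ c, ∑ d, B c d * sphereMoment n a b c d := by
    intro a b
    rw [integral_sum_sum_sphereMeasure _ _ _ fun c d => by fun_prop]
    simp only [integral_const_mul, sphereMoment]
  have hcontract : ∀ a b : Fin n, ∑ c, ∑ d, B c d * sphereMoment n a b c d =
      omegaSphere n / (n * (n + 2)) * ((if a = b then ∑ c, B c c else 0) + (B a b + B b a)) := by
    intro a b
    simp only [sphereMoment_eq, ite_and, mul_add, Finset.sum_add_distrib]
    split_ifs with hab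
    · subst hab
      simp only [mul_ite, mul_one, mul_zero, Finset.sum_ite_eq, Finset.mem_univ, if_true,
        ← Finset.sum_mul, Finset.sum_ite_irrel, Finset.sum_const_zero]
      ring
    · simp only [mul_zero, Finset.sum_const_zero, mul_ite, mul_one, Finset.sum_ite_irrel,
        Finset.sum_ite_eq, Finset.mem_univ, if_true, zero_add]
      ring
  simp only [integral_const_mul, hinner, hcontract, mul_left_comm (A _ _), ← Finset.mul_sum]
  congr 1
  simp [mul_add, Finset.sum_add_distrib, Finset.sum_mul]

end Moments

section WeylAlgebra

variable {n : ℕ} {W : Fin n → Fin n → Fin n → Fin n → ℝ}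

lemma IsWeyl.sum_apply_self_apply_self (hW : IsWeyl n W) (i j : Fin n) :
    ∑ a, W i a j a = 0 := by
  obtain ⟨hanti₁, hanti₂, -, htrace, -⟩ := hW
  rw [← htrace i j]
  exact Finset.sum_congr rfl fun a _ => by rw [hanti₁, hanti₂, neg_neg]

lemma Tkl_eq_two_mul_sum (hW : ∀ i j k l, W i j k l = W k l i j) (k l : Fin n) :
    Tkl n W k l = 2 * ∑ p, ∑ a, ∑ b, W k a p b * (W p a l b + W p b l a) := by
  have hrev : ∑ p, ∑ q, ∑ r, W k r q p * (W l p q r + W l r q p) =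
      ∑ p, ∑ q, ∑ r, W k p q r * (W l p q r + W l r q p) :=
    calc ∑ p, ∑ q, ∑ r, W k r q p * (W l p q r + W l r q p)
        = ∑ q, ∑ r, ∑ p, W k r q p * (W l p q r + W l r q p) :=
          Finset.sum_comm.trans (Finset.sum_congr rfl fun _ _ => Finset.sum_comm)
      _ = ∑ r, ∑ q, ∑ p, W k r q p * (W l r q p + W l p q r) := by
          rw [Finset.sum_comm]; simp only [add_comm]
  have hpair : ∀ p a b, W k a p b * (W p a l b + W p b l a) =
      W k a p b * (W l a p b + W l b p a) := fun p a b => by rw [hW p a, hW p b, add_comm]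
  unfold Tkl
  simp only [add_mul, Finset.sum_add_distrib, hrev, ← two_mul, hpair]
  rw [Finset.sum_comm]

end WeylAlgebra

theorem stmt11_general (n : ℕ) (W : Fin n → Fin n → Fin n → Fin n → ℝ)
    (hWeyl : IsWeyl n W) (k l : Fin n) :
    (∫ x : Metric.sphere (0 : En n) 1,
        ∑ p, hW n W (x : En n) k p * hW n W (x : En n) p l ∂(sphereMeasure n)) =
      omegaSphere n / (18 * (n : ℝ) * ((n : ℝ) + 2)) * Tkl n W k l := by
  have hprod : ∀ (x : En n) p, hW n W x k p * hW n W x p l = 1 / 9 *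
      ((∑ a, ∑ b, W k a p b * x a * x b) * (∑ c, ∑ d, W p c l d * x c * x d)) := by
    intro x p
    simp only [hW]
    ring
  rw [integral_finsetSum _ fun p _ => integrable_sphereMeasure (by simp only [hW]; fun_prop)]
  simp only [hprod, integral_const_mul]
  simp only [integral_quadForm_mul_quadForm, hWeyl.sum_apply_self_apply_self, zero_mul, zero_add,
    ← Finset.mul_sum]
  rw [Tkl_eq_two_mul_sum hWeyl.2.2.1]
  simp only [div_eq_mul_inv, mul_inv]
  ring

theorem stmt11 (n : ℕ) (hn : 3 ≤ n) (W : Fin n → Fin n → Fin n → Fin n → ℝ)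
    (hWeyl : IsWeyl n W) (k l : Fin n) :
    (∫ x : Metric.sphere (0 : En n) 1,
        ∑ p, hW n W (x : En n) k p * hW n W (x : En n) p l ∂(sphereMeasure n)) =
      omegaSphere n / (18 * (n : ℝ) * ((n : ℝ) + 2)) * Tkl n W k l :=
  stmt11_general n W hWeyl k l
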